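/- Let X be a strongly zero-dimensional metrizable topological space with card(X) ≤ 𝔠. Then for every metric d on X inducing the topology of X and every ε > 0 there exists a strongly rigid metric e on X inducing the topology of X with sup_{x,y∈X} |d(x,y) − e(x,y)| ≤ ε; i.e., the set SR(X) of strongly rigid metrics in Met(X) is dense in (Met(X), D_X). Moreover, if X is σ-compact, then SR(X) is a dense Gδ subset of (Met(X), D_X). -/

import Mathlib

/-- A metric on `X` (as a distance function) that induces the topology of `X`;
an element of the space of metrics `Met(X)`. -/
structure MetricOn (X : Type*) [TopologicalSpace X] where
  toFun : X → X → ℝ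
  symm : ∀ x y, toFun x y = toFun y x
  refl : ∀ x, toFun x x = 0
  eq_of : ∀ x y, toFun x y = 0 → x = y
  triangle : ∀ x y z, toFun x z ≤ toFun x y + toFun y z
  isOpen_iff : ∀ s : Set X, IsOpen s ↔ ∀ x ∈ s, ∃ ε > 0, ∀ y, toFun x y < ε → y ∈ s

/-- The supremum distance `D_X(d,e) = sup_{x,y} |d(x,y) - e(x,y)| ∈ [0,∞]` on `Met(X)`. -/
noncomputable def supDist {X : Type*} [TopologicalSpace X] (d e : MetricOn X) : ENNReal :=
  ⨆ p : X × X, ENNReal.ofReal |d.toFun p.1 p.2 - e.toFun p.1 p.2|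

/-- The topology on `Met(X)` generated by the open balls of the supremum distance. -/
noncomputable instance metricOnTopology (X : Type*) [TopologicalSpace X] :
    TopologicalSpace (MetricOn X) :=
  TopologicalSpace.generateFrom
    {B | ∃ (d : MetricOn X) (ε : ℝ), 0 < ε ∧ B = {e | supDist d e < ENNReal.ofReal ε}}

/-- A metric is strongly rigid if `d(x,y) = d(u,v) ≠ 0` implies `{x,y} = {u,v}`. -/
def StronglyRigid {X : Type*} [TopologicalSpace X] (d : MetricOn X) : Prop :=
  ∀ x y u v : X, d.toFun x y = d.toFun u v → d.toFun x y ≠ 0 →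
    ({x, y} : Set X) = ({u, v} : Set X)

/-- A space is strongly zero-dimensional if any two disjoint closed sets are separated
by a clopen set. -/
def StronglyZeroDim (X : Type*) [TopologicalSpace X] : Prop :=
  ∀ A B : Set X, IsClosed A → IsClosed B → A ∩ B = ∅ →
    ∃ V : Set X, IsClopen V ∧ A ⊆ V ∧ V ∩ B = ∅


/-!
Choose `c` with `16⁻¹ ^ c` small against `ε`. Strong zero-dimensionality and paracompactness
give ever finer clopen partitions whose `k`-th member has `d`-mesh at most
`16⁻¹ ^ (c + k + 1)`. If `x ≠ y` first fall into different cells at level `n`, put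
`e x y = a + 16⁻¹ ^ (c + n) + t`, where `a` is the distance of representatives of the two
level-`n` cells rounded up to the grid `16⁻¹ ^ (c + n + 1)`, and `t` is a tiny Cantor sum whose
digits spell out labels of the pairs of cells of `x, y` at all deeper levels; the labels are
injections of unordered pairs of cells into `ℕ → Bool`, which exist as `#X ≤ 𝔠`. The middle
term dominates all errors, which gives the triangle inequality and `|d - e| ≤ ε`. If
`e x y = e u v`, the grid parts and hence the Cantor sums agree, so `{x, y}` and `{u, v}` have the
same cells at all deep levels; as cells shrink to points, `{x, y} = {u, v}`.

For σ-compact `X`, a failure of rigidity is witnessed in some compact piece at some positive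
scale, and metrics with such a witness form a closed set (a projection along a compact factor),
so the strongly rigid metrics form a `Gδ`.
-/

open Set Filter Topology

namespace MetricOn

variable {X : Type*} [TopologicalSpace X]

section

variable (d : MetricOn X)

theorem nonneg (x y : X) : 0 ≤ d.toFun x y := by
  have := d.triangle x y x
  rw [d.refl, d.symm y x] at this
  linarith

theorem pos_of_ne {x y : X} (h : x ≠ y) : 0 < d.toFun x y :=
  (d.nonneg x y).lt_of_ne fun h0 => h (d.eq_of x y h0.symm)

theorem add_pos_of_ne {x y u v : X} (h : ¬(x = u ∧ y = v)) : 0 < d.toFun x u + d.toFun y v := by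
  by_cases hxu : x = u
  · exact add_pos_of_nonneg_of_pos (d.nonneg x u) (d.pos_of_ne fun hyv => h ⟨hxu, hyv⟩)
  · exact add_pos_of_pos_of_nonneg (d.pos_of_ne hxu) (d.nonneg y v)

theorem abs_sub_le_add (x y x' y' : X) :
    |d.toFun x y - d.toFun x' y'| ≤ d.toFun x x' + d.toFun y y' := by
  have := d.triangle x x' y
  have := d.triangle x' y' y
  have := d.triangle x' x y'
  have := d.triangle x y y'
  rw [abs_le]
  constructor <;> linarith [d.symm x x', d.symm y y']

theorem isOpen_ball (x : X) (r : ℝ) : IsOpen {y | d.toFun x y < r} := by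
  refine (d.isOpen_iff _).2 fun y hy => ⟨r - d.toFun x y, sub_pos.2 hy, fun z hz => ?_⟩
  have := d.triangle x y z
  simp only [mem_ofPred_eq]
  linarith

theorem eventually_lt (x : X) {ε : ℝ} (hε : 0 < ε) : ∀ᶠ y in 𝓝 x, d.toFun x y < ε :=
  (d.isOpen_ball x ε).mem_nhds (by simpa [d.refl] using hε)

theorem continuous : Continuous fun p : X × X => d.toFun p.1 p.2 := by
  refine continuous_iff_continuousAt.2 fun ⟨x, y⟩ => Metric.tendsto_nhds.2 fun ε hε => ?_
  filter_upwards [(d.eventually_lt x (half_pos hε)).prod_nhds (d.eventually_lt y (half_pos hε))]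
    with p hp
  have := d.abs_sub_le_add p.1 p.2 x y
  rw [Real.dist_eq, d.symm p.1 x, d.symm p.2 y] at *
  linarith [hp.1, hp.2]

theorem isOpen_iff_of_le {e : X → X → ℝ} (hde : ∀ x y, d.toFun x y ≤ e x y)
    (he : ∀ x, ∀ ε > 0, ∀ᶠ y in 𝓝 x, e x y < ε) (s : Set X) :
    IsOpen s ↔ ∀ x ∈ s, ∃ ε > 0, ∀ y, e x y < ε → y ∈ s := by
  refine ⟨fun hs x hx => ?_, fun h => isOpen_iff_mem_nhds.2 fun x hx => ?_⟩
  · obtain ⟨ε, hε, hball⟩ := (d.isOpen_iff s).1 hs x hx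
    exact ⟨ε, hε, fun y hy => hball y ((hde x y).trans_lt hy)⟩
  · obtain ⟨ε, hε, hball⟩ := h x hx
    filter_upwards [he x ε hε] with y hy using hball y hy

end

theorem supDist_self (e : MetricOn X) : supDist e e = 0 := by
  simp [supDist]

theorem supDist_triangle (d e f : MetricOn X) : supDist d f ≤ supDist d e + supDist e f := by
  refine iSup_le fun p => ?_
  calc ENNReal.ofReal |d.toFun p.1 p.2 - f.toFun p.1 p.2|
      ≤ ENNReal.ofReal
          (|d.toFun p.1 p.2 - e.toFun p.1 p.2| + |e.toFun p.1 p.2 - f.toFun p.1 p.2|) :=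
        ENNReal.ofReal_le_ofReal (abs_sub_le _ _ _)
    _ ≤ ENNReal.ofReal |d.toFun p.1 p.2 - e.toFun p.1 p.2| +
        ENNReal.ofReal |e.toFun p.1 p.2 - f.toFun p.1 p.2| := ENNReal.ofReal_add_le
    _ ≤ supDist d e + supDist e f :=
        add_le_add (le_iSup (fun p : X × X => ENNReal.ofReal |d.toFun p.1 p.2 - e.toFun p.1 p.2|) p)
          (le_iSup (fun p : X × X => ENNReal.ofReal |e.toFun p.1 p.2 - f.toFun p.1 p.2|) p)

theorem supDist_le_ofReal {d e : MetricOn X} {δ : ℝ}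
    (h : ∀ x y, |d.toFun x y - e.toFun x y| ≤ δ) : supDist d e ≤ ENNReal.ofReal δ :=
  iSup_le fun p => ENNReal.ofReal_le_ofReal (h p.1 p.2)

theorem abs_sub_lt_of_supDist_lt {d e : MetricOn X} {δ : ℝ} (hδ : 0 < δ)
    (h : supDist d e < ENNReal.ofReal δ) (x y : X) : |d.toFun x y - e.toFun x y| < δ :=
  (ENNReal.ofReal_lt_ofReal_iff hδ).1 <|
    (le_iSup (fun p : X × X => ENNReal.ofReal |d.toFun p.1 p.2 - e.toFun p.1 p.2|) (x, y)).trans_lt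
      h

def supBall (e : MetricOn X) (r : ℝ) : Set (MetricOn X) := {f | supDist e f < ENNReal.ofReal r}

theorem mem_supBall_self (e : MetricOn X) {r : ℝ} (hr : 0 < r) : e ∈ supBall e r := by
  simpa [supBall, supDist_self] using hr

theorem supBall_mono (e : MetricOn X) {r s : ℝ} (h : r ≤ s) : supBall e r ⊆ supBall e s :=
  fun _ hf => hf.trans_le (ENNReal.ofReal_le_ofReal h)

theorem isOpen_supBall (e : MetricOn X) {r : ℝ} (hr : 0 < r) : IsOpen (supBall e r) :=
  TopologicalSpace.GenerateOpen.basic _ ⟨e, r, hr, rfl⟩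

theorem exists_supBall_subset_supBall {d e : MetricOn X} {ε : ℝ} (he : e ∈ supBall d ε) :
    ∃ r > 0, supBall e r ⊆ supBall d ε := by
  obtain ⟨t, ht0, hdt⟩ : ∃ t : ℝ, 0 ≤ t ∧ supDist d e = ENNReal.ofReal t :=
    ⟨_, ENNReal.toReal_nonneg, (ENNReal.ofReal_toReal (he.trans_le le_top).ne).symm⟩
  have hε : 0 < ε := by
    by_contra! h
    simp [supBall, ENNReal.ofReal_of_nonpos h] at he
  have htε : t < ε := by
    rwa [supBall, mem_ofPred_eq, hdt, ENNReal.ofReal_lt_ofReal_iff hε] at he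
  refine ⟨ε - t, sub_pos.2 htε, fun f hf => ?_⟩
  calc supDist d f ≤ supDist d e + supDist e f := supDist_triangle d e f
    _ < ENNReal.ofReal t + ENNReal.ofReal (ε - t) := by
        rw [hdt]; exact ENNReal.add_lt_add_left ENNReal.ofReal_ne_top hf
    _ = ENNReal.ofReal ε := by rw [← ENNReal.ofReal_add ht0 (sub_pos.2 htε).le]; ring_nf

theorem exists_supBall_subset_of_isOpen {O : Set (MetricOn X)} (hO : IsOpen O) :
    ∀ e ∈ O, ∃ r > 0, supBall e r ⊆ O := by
  induction hO with
  | basic s hs =>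
    obtain ⟨d, ε, -, rfl⟩ := hs
    exact fun e he => exists_supBall_subset_supBall he
  | univ => exact fun _ _ => ⟨1, one_pos, subset_univ _⟩
  | inter s t _ _ hs ht =>
    rintro e ⟨hes, het⟩
    obtain ⟨r, hr, hrs⟩ := hs e hes
    obtain ⟨r', hr', hrt⟩ := ht e het
    exact ⟨min r r', lt_min hr hr', subset_inter ((supBall_mono e (min_le_left _ _)).trans hrs)
      ((supBall_mono e (min_le_right _ _)).trans hrt)⟩
  | sUnion S _ hS =>
    rintro e ⟨s, hsS, hes⟩
    obtain ⟨r, hr, hrs⟩ := hS s hsS e hes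
    exact ⟨r, hr, hrs.trans (subset_sUnion_of_mem hsS)⟩

theorem nhds_basis_supBall (e : MetricOn X) :
    (𝓝 e).HasBasis (fun r : ℝ => 0 < r) (supBall e) := by
  refine ⟨fun s => ⟨fun hs => ?_, fun ⟨r, hr, hrs⟩ =>
    mem_of_superset ((isOpen_supBall e hr).mem_nhds (mem_supBall_self e hr)) hrs⟩⟩
  obtain ⟨O, hOs, hO, heO⟩ := mem_nhds_iff.1 hs
  obtain ⟨r, hr, hrO⟩ := exists_supBall_subset_of_isOpen hO e heO
  exact ⟨r, hr, hrO.trans hOs⟩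

theorem continuous_eval : Continuous fun p : MetricOn X × X × X => p.1.toFun p.2.1 p.2.2 := by
  refine continuous_iff_continuousAt.2 fun ⟨e, x, y⟩ => Metric.tendsto_nhds.2 fun ε hε => ?_
  have he : ∀ᶠ f in 𝓝 e, f ∈ supBall e (ε / 2) :=
    (nhds_basis_supBall e).mem_of_mem (half_pos hε)
  have hxy : ∀ᶠ q in 𝓝 (x, y), dist (e.toFun q.1 q.2) (e.toFun x y) < ε / 2 :=
    Metric.tendsto_nhds.1 (e.continuous.tendsto (x, y)) _ (half_pos hε)
  filter_upwards [he.prod_nhds hxy] with ⟨f, q⟩ ⟨hf, hq⟩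
  have := abs_sub_lt_of_supDist_lt (half_pos hε) hf q.1 q.2
  rw [Real.dist_eq] at hq ⊢
  calc |f.toFun q.1 q.2 - e.toFun x y|
      ≤ |e.toFun q.1 q.2 - f.toFun q.1 q.2| + |e.toFun q.1 q.2 - e.toFun x y| := by
        rw [abs_sub_comm (e.toFun q.1 q.2)]; exact abs_sub_le _ _ _
    _ < ε := by linarith

end MetricOn

namespace Cardinal

variable {c : ℝ}

theorem cantorFunction_nonneg (h1 : 0 ≤ c) (f : ℕ → Bool) : 0 ≤ cantorFunction c f :=
  tsum_nonneg fun _ => cantorFunctionAux_nonneg h1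

theorem cantorFunction_le_inv_one_sub (h1 : 0 ≤ c) (h2 : c < 1) (f : ℕ → Bool) :
    cantorFunction c f ≤ (1 - c)⁻¹ :=
  calc cantorFunction c f ≤ cantorFunction c fun _ => true := cantorFunction_le h1 h2 fun _ _ => rfl
    _ = (1 - c)⁻¹ := by simp [cantorFunction, cantorFunctionAux, tsum_geometric_of_lt_one h1 h2]

theorem cantorFunction_eq_sum_add (h1 : 0 ≤ c) (h2 : c < 1) (f : ℕ → Bool) (m : ℕ) :
    cantorFunction c f = ∑ i ∈ Finset.range m, cantorFunctionAux c f i +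
      c ^ m * cantorFunction c fun i => f (i + m) := by
  rw [cantorFunction, ← (summable_cantor_function f h1 h2).sum_add_tsum_nat_add m, cantorFunction,
    ← tsum_mul_left]
  congr 1
  refine tsum_congr fun i => ?_
  cases h : f (i + m) <;> simp [cantorFunctionAux, h, pow_add, mul_comm]

theorem abs_cantorFunction_sub_le (h1 : 0 ≤ c) (h2 : c < 1) {f g : ℕ → Bool} {m : ℕ}
    (hfg : ∀ i < m, f i = g i) :
    |cantorFunction c f - cantorFunction c g| ≤ c ^ m * (1 - c)⁻¹ := by
  have hsum : ∑ i ∈ Finset.range m, cantorFunctionAux c f i =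
      ∑ i ∈ Finset.range m, cantorFunctionAux c g i :=
    Finset.sum_congr rfl fun i hi => cantorFunctionAux_eq (hfg i (Finset.mem_range.1 hi))
  rw [cantorFunction_eq_sum_add h1 h2 f m, cantorFunction_eq_sum_add h1 h2 g m, hsum,
    add_sub_add_left_eq_sub, ← mul_sub, abs_mul, abs_of_nonneg (pow_nonneg h1 m)]
  refine mul_le_mul_of_nonneg_left (abs_sub_le_of_nonneg_of_le ?_ ?_ ?_ ?_) (pow_nonneg h1 m) <;>
    first
    | exact cantorFunction_nonneg h1 _
    | exact cantorFunction_le_inv_one_sub h1 h2 _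

theorem cantorFunction_le_of_eq_false (h1 : 0 ≤ c) (h2 : c < 1) {f : ℕ → Bool} {m : ℕ}
    (hf : ∀ i < m, f i = false) : cantorFunction c f ≤ c ^ m * (1 - c)⁻¹ := by
  have h0 : cantorFunction c (fun _ => false) = 0 := by simp [cantorFunction, cantorFunctionAux]
  simpa [h0, abs_of_nonneg (cantorFunction_nonneg h1 f)] using
    abs_cantorFunction_sub_le h1 h2 (g := fun _ => false) hf

theorem pow_succ_mul_cantorFunction_mem_Ico (h1 : 0 < c) (h2 : c < 1 / 2)
    (n : ℕ) (f : ℕ → Bool) : c ^ (n + 1) * cantorFunction c f ∈ Ico 0 (c ^ n) := by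
  refine ⟨mul_nonneg (by positivity) (cantorFunction_nonneg h1.le f), ?_⟩
  have hc1 : 0 < 1 - c := by linarith
  calc c ^ (n + 1) * cantorFunction c f ≤ c ^ (n + 1) * (1 - c)⁻¹ :=
        mul_le_mul_of_nonneg_left (cantorFunction_le_inv_one_sub h1.le (by linarith) f)
          (by positivity)
    _ = c ^ n * (c / (1 - c)) := by ring
    _ < c ^ n * 1 := mul_lt_mul_of_pos_left ((div_lt_one hc1).2 (by linarith)) (by positivity)
    _ = c ^ n := mul_one _

end Cardinal

open AddSubgroup in
theorem eq_of_sub_mem_zmultiples {h a f g : ℝ} (hh : 0 < h) (hf : a - f ∈ zmultiples h)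
    (hg : a - g ∈ zmultiples h) (hf' : f ∈ Ico 0 h) (hg' : g ∈ Ico 0 h) : f = g := by
  obtain ⟨k, hk⟩ := mem_zmultiples_iff.1 hf
  obtain ⟨l, hl⟩ := mem_zmultiples_iff.1 hg
  have key : ∀ u ∈ Ico 0 h, ∀ n : ℤ, n • h = a - u → toIcoMod hh 0 a = u := fun u hu n hn =>
    (toIcoMod_eq_iff hh).2 ⟨by simpa using hu, n, by rw [hn]; ring⟩
  rw [← key f hf' k hk, key g hg' l hl]

noncomputable def roundUp (h t : ℝ) : ℝ := ⌈t / h⌉ * h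

theorem le_roundUp {h : ℝ} (hh : 0 < h) (t : ℝ) : t ≤ roundUp h t :=
  (div_le_iff₀ hh).1 (Int.le_ceil _)

theorem roundUp_lt {h : ℝ} (hh : 0 < h) (t : ℝ) : roundUp h t < t + h := by
  rw [roundUp, ← lt_div_iff₀ hh, add_div, div_self hh.ne']
  exact Int.ceil_lt_add_one _

theorem roundUp_mem_zmultiples (h t : ℝ) : roundUp h t ∈ AddSubgroup.zmultiples h :=
  ⟨⌈t / h⌉, by simp [roundUp]⟩

theorem inv_pow_mem_zmultiples {b : ℕ} (hb : b ≠ 0) {m n : ℕ} (hmn : m ≤ n) :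
    ((b : ℝ)⁻¹) ^ m ∈ AddSubgroup.zmultiples (((b : ℝ)⁻¹) ^ n) := by
  refine ⟨(b : ℤ) ^ (n - m), ?_⟩
  have hb' : (b : ℝ) ≠ 0 := Nat.cast_ne_zero.2 hb
  simp only [zsmul_eq_mul, Int.cast_pow, Int.cast_natCast, inv_pow]
  rw [← Nat.sub_add_cancel hmn, pow_add, Nat.add_sub_cancel]
  field_simp

section Partitions

variable {X : Type*} [TopologicalSpace X]

theorem DiscreteQuotient.proj_eq_of_le {S T : DiscreteQuotient X} (h : S ≤ T) {x y : X}
    (hxy : S.proj x = S.proj y) : T.proj x = T.proj y := by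
  rw [← ofLE_proj h, hxy, ofLE_proj]

/-- Send each point to the least member of the cover containing it, for a well-order on `ι`;
by local finiteness the union of the earlier members is closed, so the fibres are clopen. -/
theorem LocallyFinite.exists_isLocallyConstant_mem {ι : Type*} {V : ι → Set X}
    (hlf : LocallyFinite V) (hV : ∀ i, IsClopen (V i)) (hcov : ∀ x, ∃ i, x ∈ V i) :
    ∃ f : X → ι, IsLocallyConstant f ∧ ∀ x, x ∈ V (f x) := by
  let r : ι → ι → Prop := WellOrderingRel
  have wf : WellFounded r := IsWellFounded.wf
  let f x := wf.min {i | x ∈ V i} (hcov x)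
  have hfib : ∀ x i, f x = i ↔ x ∈ V i ∧ ∀ j, r j i → x ∉ V j := by
    refine fun x i => ⟨?_, fun ⟨hxi, hmin⟩ => ?_⟩
    · rintro rfl
      exact ⟨wf.min_mem _ (hcov x), fun j hj hxj => wf.not_lt_min _ hxj hj⟩
    · rcases trichotomous_of r (f x) i with h | h | h
      · exact absurd (wf.min_mem _ (hcov x)) (hmin _ h)
      · exact h
      · exact absurd h (wf.not_lt_min _ hxi)
  refine ⟨f, IsLocallyConstant.iff_isOpen_fiber.2 fun i => ?_, fun x => wf.min_mem _ (hcov x)⟩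
  have : f ⁻¹' {i} = V i ∩ (⋃ j : {j // r j i}, V j)ᶜ := by
    ext x
    simp [hfib]
  rw [this]
  exact (hV i).isOpen.inter ((hlf.comp_injective Subtype.val_injective).isClosed_iUnion
    fun j => (hV j.1).isClosed).isOpen_compl

theorem StronglyZeroDim.exists_isClopen_between (hX : StronglyZeroDim X) {A U : Set X}
    (hA : IsClosed A) (hU : IsOpen U) (hAU : A ⊆ U) : ∃ V, IsClopen V ∧ A ⊆ V ∧ V ⊆ U := by
  obtain ⟨V, hV, hAV, hVU⟩ := hX A Uᶜ hA hU.isClosed_compl (sdiff_eq_empty.2 hAU)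
  exact ⟨V, hV, hAV, sdiff_eq_empty.1 hVU⟩

theorem StronglyZeroDim.exists_isLocallyConstant_mem [ParacompactSpace X] [NormalSpace X]
    (hX : StronglyZeroDim X) {ι : Type*} {U : ι → Set X} (hU : ∀ i, IsOpen (U i))
    (hcov : ⋃ i, U i = univ) : ∃ f : X → ι, IsLocallyConstant f ∧ ∀ x, x ∈ U (f x) := by
  obtain ⟨v, hvo, hvcov, hvlf, hvU⟩ := precise_refinement U hU hcov
  obtain ⟨w, hwcov, -, hwv⟩ := exists_subset_iUnion_closure_subset isClosed_univ hvo
    (fun x _ => hvlf.point_finite x) hvcov.ge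
  choose V hVclopen hwV hVv using fun i =>
    hX.exists_isClopen_between isClosed_closure (hvo i) (hwv i)
  obtain ⟨f, hf, hfV⟩ := (hvlf.subset hVv).exists_isLocallyConstant_mem hVclopen fun x =>
    (mem_iUnion.1 (hwcov (mem_univ x))).imp fun i hi => hwV i (subset_closure hi)
  exact ⟨f, hf, fun x => hvU _ (hVv _ (hfV x))⟩

theorem StronglyZeroDim.exists_discreteQuotient_dist_lt [ParacompactSpace X] [NormalSpace X]
    (hX : StronglyZeroDim X) (d : MetricOn X) {r : ℝ} (hr : 0 < r) :
    ∃ S : DiscreteQuotient X, ∀ x y, S.proj x = S.proj y → d.toFun x y < r := by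
  have hcov : ⋃ x, {y | d.toFun x y < r / 2} = univ := eq_univ_of_forall fun x =>
    mem_iUnion.2 ⟨x, show d.toFun x x < r / 2 by simpa [d.refl] using half_pos hr⟩
  obtain ⟨f, hf, hfx⟩ := hX.exists_isLocallyConstant_mem (fun x => d.isOpen_ball x (r / 2)) hcov
  refine ⟨(⟨f, hf⟩ : LocallyConstant X X).discreteQuotient, fun x y hxy => ?_⟩
  have hfxy : f x = f y := Quotient.eq''.1 hxy
  have hx : d.toFun (f x) x < r / 2 := hfx x
  have hy : d.toFun (f x) y < r / 2 := hfxy ▸ hfx y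
  linarith [d.triangle x (f x) y, d.symm x (f x)]

end Partitions

open Cardinal in
theorem Cardinal.nonempty_sym2_embedding_cantor {Y : Type} (hY : #Y ≤ 𝔠) :
    Nonempty (Sym2 Y ↪ (ℕ → Bool)) := by
  rw [← Cardinal.le_def]
  calc #(Sym2 Y) ≤ #(Y × Y) := mk_le_of_surjective Sym2.mk_surjective
    _ = #Y * #Y := by simp
    _ ≤ 𝔠 * 𝔠 := mul_le_mul' hY hY
    _ = #(ℕ → Bool) := by simp

section Construction

variable {X : Type*} [TopologicalSpace X]

structure ClopenRefinement (d : MetricOn X) (c : ℕ) where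
  part : ℕ → DiscreteQuotient X
  antitone : Antitone part
  mesh : ∀ k x y, (part k).proj x = (part k).proj y → d.toFun x y ≤ (16⁻¹ : ℝ) ^ (c + k + 1)

namespace ClopenRefinement

theorem nonempty [ParacompactSpace X] [NormalSpace X] (hX : StronglyZeroDim X) (d : MetricOn X)
    (c : ℕ) : Nonempty (ClopenRefinement d c) := by
  choose D hD using fun k : ℕ =>
    hX.exists_discreteQuotient_dist_lt d (r := (16⁻¹ : ℝ) ^ (c + k + 1)) (by positivity)
  refine ⟨⟨fun k => (Finset.range (k + 1)).inf D,
    fun k l hkl => Finset.inf_mono (Finset.range_subset_range.2 (by omega)), fun k x y hxy => ?_⟩⟩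
  exact (hD k x y (DiscreteQuotient.proj_eq_of_le
    (Finset.inf_le (Finset.mem_range.2 (Nat.lt_succ_self k))) hxy)).le

open Cardinal

variable {d : MetricOn X} {c : ℕ} (P : ClopenRefinement d c)

theorem proj_eq_of_le {k l : ℕ} (hkl : k ≤ l) {x y : X}
    (h : (P.part l).proj x = (P.part l).proj y) : (P.part k).proj x = (P.part k).proj y :=
  DiscreteQuotient.proj_eq_of_le (P.antitone hkl) h

theorem eventually_proj_ne {x y : X} (hxy : x ≠ y) :
    ∀ᶠ k in atTop, (P.part k).proj x ≠ (P.part k).proj y := by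
  obtain ⟨k, hk⟩ := exists_pow_lt_of_lt_one (d.pos_of_ne hxy) (by norm_num : (16⁻¹ : ℝ) < 1)
  refine eventually_atTop.2 ⟨k, fun l hl h => ?_⟩
  have := P.mesh l x y h
  have : (16⁻¹ : ℝ) ^ (c + l + 1) ≤ 16⁻¹ ^ k :=
    pow_le_pow_of_le_one (by norm_num) (by norm_num) (by omega)
  linarith

/-- `0` when `x = y`, as `sInf ∅ = 0`. -/
noncomputable def sep (x y : X) : ℕ := sInf {k | (P.part k).proj x ≠ (P.part k).proj y}

theorem proj_sep_ne {x y : X} (hxy : x ≠ y) :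
    (P.part (P.sep x y)).proj x ≠ (P.part (P.sep x y)).proj y :=
  Nat.sInf_mem (P.eventually_proj_ne hxy).exists

theorem proj_eq_of_lt_sep {x y : X} {k : ℕ} (hk : k < P.sep x y) :
    (P.part k).proj x = (P.part k).proj y :=
  not_not.1 fun h => (Nat.sInf_le h).not_gt hk

theorem lt_sep_of_proj_eq {x y : X} (hxy : x ≠ y) {k : ℕ}
    (hk : (P.part k).proj x = (P.part k).proj y) : k < P.sep x y :=
  not_le.1 fun h => P.proj_sep_ne hxy (P.proj_eq_of_le h hk)

theorem sep_comm (x y : X) : P.sep x y = P.sep y x := by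
  simp only [sep, ne_comm]

theorem sep_eq_of_sep_lt {x y z : X} (hxy : x ≠ y) (hxz : x ≠ z) (hlt : P.sep x y < P.sep y z) :
    P.sep x z = P.sep x y := by
  refine le_antisymm (Nat.sInf_le ?_) (not_lt.1 fun h => P.proj_sep_ne hxz ?_)
  · rw [mem_ofPred_eq, ← P.proj_eq_of_lt_sep hlt]
    exact P.proj_sep_ne hxy
  · exact (P.proj_eq_of_lt_sep h).trans (P.proj_eq_of_lt_sep (h.trans hlt))

theorem min_sep_le {x y z : X} (hxz : x ≠ z) : min (P.sep x y) (P.sep y z) ≤ P.sep x z :=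
  not_lt.1 fun h => P.proj_sep_ne hxz <|
    (P.proj_eq_of_lt_sep (h.trans_le (min_le_left _ _))).trans
      (P.proj_eq_of_lt_sep (h.trans_le (min_le_right _ _)))

def node (k : ℕ) (x y : X) : Sym2 (P.part k) := s((P.part k).proj x, (P.part k).proj y)

theorem node_comm (k : ℕ) (x y : X) : P.node k x y = P.node k y x := Sym2.eq_swap

theorem eq_or_eq_of_eventually_node_eq {x y u v : X}
    (h : ∀ᶠ k in atTop, P.node k x y = P.node k u v) : x = u ∨ x = v := by
  by_contra! hne
  obtain ⟨k, hk, hu, hv⟩ :=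
    (h.and ((P.eventually_proj_ne hne.1).and (P.eventually_proj_ne hne.2))).exists
  rcases Sym2.mem_iff.1 (hk ▸ Sym2.mem_mk_left _ _ : (P.part k).proj x ∈ P.node k u v) with h | h
  exacts [hu h, hv h]

theorem pair_eq_of_eventually_node_eq {x y u v : X}
    (h : ∀ᶠ k in atTop, P.node k x y = P.node k u v) : ({x, y} : Set X) = {u, v} := by
  have hy : ∀ᶠ k in atTop, P.node k y x = P.node k u v := by simpa only [P.node_comm _ x] using h
  have hu : ∀ᶠ k in atTop, P.node k u v = P.node k x y := h.mono fun _ => Eq.symm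
  have hv : ∀ᶠ k in atTop, P.node k v u = P.node k x y := by
    simpa only [P.node_comm _ u] using hu
  exact Subset.antisymm (pair_subset (P.eq_or_eq_of_eventually_node_eq h)
      (P.eq_or_eq_of_eventually_node_eq hy))
    (pair_subset (P.eq_or_eq_of_eventually_node_eq hu) (P.eq_or_eq_of_eventually_node_eq hv))

noncomputable def repDist (k : ℕ) (x y : X) : ℝ :=
  d.toFun (Quotient.out ((P.part k).proj x)) (Quotient.out ((P.part k).proj y))

theorem abs_sub_repDist_le (k : ℕ) (x y : X) :
    |d.toFun x y - P.repDist k x y| ≤ 2 * (16⁻¹ : ℝ) ^ (c + k + 1) := by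
  have hrep : ∀ z, d.toFun z (Quotient.out ((P.part k).proj z)) ≤ (16⁻¹ : ℝ) ^ (c + k + 1) :=
    fun z => P.mesh k _ _ (Quotient.out_eq' _).symm
  unfold repDist
  linarith [d.abs_sub_le_add x y (Quotient.out ((P.part k).proj x))
    (Quotient.out ((P.part k).proj y)), hrep x, hrep y]

variable (α : (k : ℕ) → Sym2 (P.part k) ↪ (ℕ → Bool))

/-- Digit `Nat.pair k j` is bit `j` of the label of the pair of cells of `x, y` at level `k`,
for the levels `k` past the separation level (and `false` before it). -/
noncomputable def code (x y : X) (w : ℕ) : Bool :=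
  decide (P.sep x y < w.unpair.1) && α w.unpair.1 (P.node w.unpair.1 x y) w.unpair.2

theorem code_eq_false {x y : X} {w : ℕ} (hw : w ≤ P.sep x y) : P.code α x y w = false := by
  simp [code, (Nat.unpair_left_le w).trans hw]

theorem code_pair {x y : X} {k : ℕ} (hk : P.sep x y < k) (j : ℕ) :
    P.code α x y (Nat.pair k j) = α k (P.node k x y) j := by
  rw [code, Nat.unpair_pair]
  simp [hk]

theorem code_comm (x y : X) : P.code α x y = P.code α y x := by
  ext w
  simp only [code, P.sep_comm x y, P.node_comm _ x y]

open Classical in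
noncomputable def rigidDist (x y : X) : ℝ :=
  if x = y then 0 else
    roundUp ((16⁻¹ : ℝ) ^ (c + P.sep x y + 1)) (P.repDist (P.sep x y) x y) +
      (16⁻¹ : ℝ) ^ (c + P.sep x y) + (16⁻¹ : ℝ) ^ (c + 2) * cantorFunction 16⁻¹ (P.code α x y)

theorem rigidDist_of_ne {x y : X} (hxy : x ≠ y) : P.rigidDist α x y =
    roundUp ((16⁻¹ : ℝ) ^ (c + P.sep x y + 1)) (P.repDist (P.sep x y) x y) +
      (16⁻¹ : ℝ) ^ (c + P.sep x y) + (16⁻¹ : ℝ) ^ (c + 2) * cantorFunction 16⁻¹ (P.code α x y) :=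
  if_neg hxy

theorem rigidDist_self (x : X) : P.rigidDist α x x = 0 := if_pos rfl

theorem rigidDist_comm (x y : X) : P.rigidDist α x y = P.rigidDist α y x := by
  by_cases hxy : x = y
  · rw [hxy]
  · rw [P.rigidDist_of_ne α hxy, P.rigidDist_of_ne α (Ne.symm hxy), P.sep_comm, repDist,
      repDist, d.symm, P.code_comm]

theorem mul_cantorFunction_code_le (x y : X) :
    (16⁻¹ : ℝ) ^ (c + 2) * cantorFunction 16⁻¹ (P.code α x y) ≤
      (16⁻¹ : ℝ) ^ (c + P.sep x y) / 3840 := by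
  have h := cantorFunction_le_of_eq_false (c := 16⁻¹) (by norm_num) (by norm_num)
    (m := P.sep x y + 1) fun i hi => P.code_eq_false α (Nat.lt_succ_iff.1 hi)
  calc (16⁻¹ : ℝ) ^ (c + 2) * cantorFunction 16⁻¹ (P.code α x y)
      ≤ (16⁻¹ : ℝ) ^ (c + 2) * ((16⁻¹ : ℝ) ^ (P.sep x y + 1) * (1 - 16⁻¹)⁻¹) := by gcongr
    _ = (16⁻¹ : ℝ) ^ (c + P.sep x y) / 3840 := by ring

theorem add_le_rigidDist {x y : X} (hxy : x ≠ y) :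
    d.toFun x y + 7 / 8 * (16⁻¹ : ℝ) ^ (c + P.sep x y) ≤ P.rigidDist α x y := by
  have hrep := (abs_le.1 (P.abs_sub_repDist_le (P.sep x y) x y)).2
  have hround := le_roundUp (h := (16⁻¹ : ℝ) ^ (c + P.sep x y + 1)) (by positivity)
    (P.repDist (P.sep x y) x y)
  have htail : 0 ≤ (16⁻¹ : ℝ) ^ (c + 2) * cantorFunction 16⁻¹ (P.code α x y) :=
    mul_nonneg (by positivity) (cantorFunction_nonneg (by norm_num) _)
  have h16 := pow_succ (16⁻¹ : ℝ) (c + P.sep x y)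
  rw [P.rigidDist_of_ne α hxy]
  linarith

theorem rigidDist_le_add {x y : X} (hxy : x ≠ y) :
    P.rigidDist α x y ≤ d.toFun x y + 5 / 4 * (16⁻¹ : ℝ) ^ (c + P.sep x y) := by
  have hrep := (abs_le.1 (P.abs_sub_repDist_le (P.sep x y) x y)).1
  have hround := roundUp_lt (h := (16⁻¹ : ℝ) ^ (c + P.sep x y + 1)) (by positivity)
    (P.repDist (P.sep x y) x y)
  have htail := P.mul_cantorFunction_code_le α x y
  have hpos : (0 : ℝ) < (16⁻¹ : ℝ) ^ (c + P.sep x y) := by positivity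
  have h16 := pow_succ (16⁻¹ : ℝ) (c + P.sep x y)
  rw [P.rigidDist_of_ne α hxy]
  linarith

theorem rigidDist_nonneg (x y : X) : 0 ≤ P.rigidDist α x y := by
  by_cases hxy : x = y
  · rw [hxy, rigidDist_self]
  · have := P.add_le_rigidDist α hxy
    have := d.nonneg x y
    have : (0 : ℝ) < (16⁻¹ : ℝ) ^ (c + P.sep x y) := by positivity
    linarith

theorem rigidDist_triangle_of_sep_lt {x y z : X} (hxy : x ≠ y) (hyz : y ≠ z) (hxz : x ≠ z)
    (hlt : P.sep x y < P.sep y z) :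
    P.rigidDist α x z ≤ P.rigidDist α x y + P.rigidDist α y z := by
  have hsep := P.sep_eq_of_sep_lt hxy hxz hlt
  have hrep : P.repDist (P.sep x y) x z = P.repDist (P.sep x y) x y := by
    rw [repDist, repDist, P.proj_eq_of_lt_sep hlt]
  have hcode : ∀ w < P.sep y z, P.code α x z w = P.code α x y w := fun w hw => by
    simp only [code, node, hsep, P.proj_eq_of_lt_sep ((Nat.unpair_left_le w).trans_lt hw)]
  have htail := abs_cantorFunction_sub_le (c := 16⁻¹) (by norm_num) (by norm_num) hcode
  have hρ : (0 : ℝ) ≤ (16⁻¹ : ℝ) ^ (c + 2) := by positivity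
  have hyz' := P.add_le_rigidDist α hyz
  have := d.nonneg y z
  have hpow : (16⁻¹ : ℝ) ^ (c + 2) * ((16⁻¹ : ℝ) ^ P.sep y z * (1 - 16⁻¹)⁻¹) =
      (16⁻¹ : ℝ) ^ (c + P.sep y z) / 240 := by ring
  have hpos : (0 : ℝ) < (16⁻¹ : ℝ) ^ (c + P.sep y z) := by positivity
  rw [P.rigidDist_of_ne α hxz, P.rigidDist_of_ne α hxy, hsep, hrep]
  linarith [mul_le_mul_of_nonneg_left ((le_abs_self _).trans htail) hρ]

theorem rigidDist_triangle (x y z : X) :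
    P.rigidDist α x z ≤ P.rigidDist α x y + P.rigidDist α y z := by
  rcases eq_or_ne x z with rfl | hxz
  · rw [rigidDist_self]
    exact add_nonneg (P.rigidDist_nonneg α x y) (P.rigidDist_nonneg α y x)
  rcases eq_or_ne x y with rfl | hxy
  · rw [rigidDist_self, zero_add]
  rcases eq_or_ne y z with rfl | hyz
  · rw [rigidDist_self, add_zero]
  rcases lt_trichotomy (P.sep x y) (P.sep y z) with h | h | h
  · exact P.rigidDist_triangle_of_sep_lt α hxy hyz hxz h
  · have hmin := P.min_sep_le (y := y) hxz
    rw [← h, min_self] at hmin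
    have : (16⁻¹ : ℝ) ^ (c + P.sep x z) ≤ 16⁻¹ ^ (c + P.sep x y) :=
      pow_le_pow_of_le_one (by norm_num) (by norm_num) (by omega)
    have hyz' := P.add_le_rigidDist α hyz
    rw [← h] at hyz'
    have : (0 : ℝ) < 16⁻¹ ^ (c + P.sep x y) := by positivity
    linarith [P.rigidDist_le_add α hxz, P.add_le_rigidDist α hxy, d.triangle x y z]
  · have := P.rigidDist_triangle_of_sep_lt α hyz.symm hxy.symm hxz.symm
      (by rwa [P.sep_comm z y, P.sep_comm y x])
    rw [P.rigidDist_comm α z x, P.rigidDist_comm α z y, P.rigidDist_comm α y x] at this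
    linarith

theorem rigidDist_sub_tail_mem_zmultiples {x y : X} (hxy : x ≠ y) {m : ℕ}
    (hm : P.sep x y ≤ m) :
    P.rigidDist α x y - (16⁻¹ : ℝ) ^ (c + m + 1 + 1) *
      cantorFunction 16⁻¹ (fun i => P.code α x y (i + m)) ∈
      AddSubgroup.zmultiples ((16⁻¹ : ℝ) ^ (c + m + 1)) := by
  have hmem : ∀ {a : ℕ}, a ≤ c + m + 1 →
      (16⁻¹ : ℝ) ^ a ∈ AddSubgroup.zmultiples ((16⁻¹ : ℝ) ^ (c + m + 1)) := fun h => by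
    simpa using inv_pow_mem_zmultiples (b := 16) (by norm_num) h
  rw [P.rigidDist_of_ne α hxy, cantorFunction_eq_sum_add (by norm_num) (by norm_num) _ m,
    mul_add, Finset.mul_sum]
  have hsplit : ∀ a b s t : ℝ, a + b + (s + t) - t = a + b + s := fun _ _ _ _ => by ring
  rw [show (16⁻¹ : ℝ) ^ (c + m + 1 + 1) = 16⁻¹ ^ (c + 2) * 16⁻¹ ^ m by ring, mul_assoc, hsplit]
  refine add_mem (add_mem ?_ (hmem (by omega))) (sum_mem fun i hi => ?_)
  · exact AddSubgroup.zmultiples_le.2 (hmem (by omega)) (roundUp_mem_zmultiples _ _)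
  · cases h : P.code α x y i
    · simp [cantorFunctionAux, h]
    · rw [cantorFunctionAux_true h, ← pow_add]
      exact hmem (by have := Finset.mem_range.1 hi; omega)

theorem node_eq_of_rigidDist_eq {x y u v : X} (hxy : x ≠ y) (huv : u ≠ v)
    (hle : P.sep x y ≤ P.sep u v) (h : P.rigidDist α x y = P.rigidDist α u v) :
    ∀ k > P.sep u v, P.node k x y = P.node k u v := by
  have hfine := eq_of_sub_mem_zmultiples (by positivity)
    (P.rigidDist_sub_tail_mem_zmultiples α hxy hle)
    (h ▸ P.rigidDist_sub_tail_mem_zmultiples α huv le_rfl)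
    (pow_succ_mul_cantorFunction_mem_Ico (by norm_num) (by norm_num) _ _)
    (pow_succ_mul_cantorFunction_mem_Ico (by norm_num) (by norm_num) _ _)
  have hcode := cantorFunction_injective (by norm_num) (by norm_num)
    (mul_left_cancel₀ (by positivity) hfine)
  intro k hk
  refine (α k).injective (funext fun j => ?_)
  have := congrFun hcode (Nat.pair k j - P.sep u v)
  simp only [Nat.sub_add_cancel (hk.le.trans (Nat.left_le_pair k j))] at this
  rwa [P.code_pair α (hle.trans_lt hk), P.code_pair α hk] at this

theorem pair_eq_of_rigidDist_eq {x y u v : X} (h : P.rigidDist α x y = P.rigidDist α u v)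
    (h0 : P.rigidDist α x y ≠ 0) : ({x, y} : Set X) = {u, v} := by
  have hxy : x ≠ y := by rintro rfl; exact h0 (P.rigidDist_self α x)
  have huv : u ≠ v := by rintro rfl; exact h0 (h.trans (P.rigidDist_self α u))
  rcases le_total (P.sep x y) (P.sep u v) with hle | hle
  · exact P.pair_eq_of_eventually_node_eq ((eventually_gt_atTop _).mono
      (P.node_eq_of_rigidDist_eq α hxy huv hle h))
  · exact (P.pair_eq_of_eventually_node_eq ((eventually_gt_atTop _).mono
      (P.node_eq_of_rigidDist_eq α huv hxy hle h.symm))).symm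

theorem toFun_le_rigidDist (x y : X) : d.toFun x y ≤ P.rigidDist α x y := by
  rcases eq_or_ne x y with rfl | hxy
  · rw [d.refl, rigidDist_self]
  · have := P.add_le_rigidDist α hxy
    have : (0 : ℝ) < 16⁻¹ ^ (c + P.sep x y) := by positivity
    linarith

theorem abs_sub_rigidDist_le (x y : X) :
    |d.toFun x y - P.rigidDist α x y| ≤ 5 / 4 * (16⁻¹ : ℝ) ^ c := by
  rcases eq_or_ne x y with rfl | hxy
  · simp [d.refl, rigidDist_self]
  · have := P.rigidDist_le_add α hxy
    have : (16⁻¹ : ℝ) ^ (c + P.sep x y) ≤ 16⁻¹ ^ c :=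
      pow_le_pow_of_le_one (by norm_num) (by norm_num) (by omega)
    rw [abs_sub_comm, abs_of_nonneg (sub_nonneg.2 (P.toFun_le_rigidDist α x y))]
    linarith

theorem eventually_rigidDist_lt (x : X) {ε : ℝ} (hε : 0 < ε) :
    ∀ᶠ y in 𝓝 x, P.rigidDist α x y < ε := by
  obtain ⟨k, hk⟩ := exists_pow_lt_of_lt_one (by positivity : 0 < ε / 3)
    (by norm_num : (16⁻¹ : ℝ) < 1)
  filter_upwards [((P.part k).isOpen_preimage {(P.part k).proj x}).mem_nhds rfl] with y hy
  rcases eq_or_ne x y with rfl | hxy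
  · rwa [rigidDist_self]
  have hsep := P.lt_sep_of_proj_eq hxy hy.symm
  have h1 : (16⁻¹ : ℝ) ^ (c + P.sep x y) ≤ 16⁻¹ ^ (c + k + 1) :=
    pow_le_pow_of_le_one (by norm_num) (by norm_num) (by omega)
  have h2 : (16⁻¹ : ℝ) ^ (c + k + 1) ≤ 16⁻¹ ^ k :=
    pow_le_pow_of_le_one (by norm_num) (by norm_num) (by omega)
  linarith [P.rigidDist_le_add α hxy, P.mesh k x y hy.symm]

noncomputable def rigidMetric : MetricOn X where
  toFun := P.rigidDist α
  symm := P.rigidDist_comm α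
  refl := P.rigidDist_self α
  eq_of x y h := not_not.1 fun hxy => by
    have := P.add_le_rigidDist α hxy
    have : (0 : ℝ) < 16⁻¹ ^ (c + P.sep x y) := by positivity
    linarith [d.nonneg x y]
  triangle := P.rigidDist_triangle α
  isOpen_iff :=
    d.isOpen_iff_of_le (P.toFun_le_rigidDist α) fun x _ => P.eventually_rigidDist_lt α x

theorem stronglyRigid_rigidMetric : StronglyRigid (P.rigidMetric α) :=
  fun _ _ _ _ => P.pair_eq_of_rigidDist_eq α

end ClopenRefinement

end Construction

theorem StronglyZeroDim.exists_stronglyRigid_abs_sub_le {X : Type} [TopologicalSpace X]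
    [TopologicalSpace.MetrizableSpace X] (hX : StronglyZeroDim X)
    (hcard : Cardinal.mk X ≤ Cardinal.continuum) (d : MetricOn X) {ε : ℝ} (hε : 0 < ε) :
    ∃ e : MetricOn X, StronglyRigid e ∧ ∀ x y, |d.toFun x y - e.toFun x y| ≤ ε := by
  let _ := TopologicalSpace.metrizableSpaceMetric X
  obtain ⟨c, hc⟩ := exists_pow_lt_of_lt_one (by positivity : 0 < ε / 2)
    (by norm_num : (16⁻¹ : ℝ) < 1)
  obtain ⟨P⟩ := ClopenRefinement.nonempty hX d c
  have hα : ∀ k, Nonempty (Sym2 (P.part k) ↪ (ℕ → Bool)) := fun k =>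
    Cardinal.nonempty_sym2_embedding_cantor
      ((Cardinal.mk_le_of_surjective (P.part k).proj_surjective).trans hcard)
  refine ⟨P.rigidMetric fun k => (hα k).some, P.stronglyRigid_rigidMetric _, fun x y =>
    (P.abs_sub_rigidDist_le _ x y).trans (by linarith)⟩

theorem StronglyZeroDim.dense_setOf_stronglyRigid {X : Type} [TopologicalSpace X]
    [TopologicalSpace.MetrizableSpace X] (hX : StronglyZeroDim X)
    (hcard : Cardinal.mk X ≤ Cardinal.continuum) : Dense {e : MetricOn X | StronglyRigid e} :=
  fun e => (mem_closure_iff_nhds_basis (MetricOn.nhds_basis_supBall e)).2 fun r hr => by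
    obtain ⟨f, hf, hef⟩ := hX.exists_stronglyRigid_abs_sub_le hcard e (half_pos hr)
    exact ⟨f, hf, (MetricOn.supDist_le_ofReal hef).trans_lt
      ((ENNReal.ofReal_lt_ofReal_iff hr).2 (half_lt_self hr))⟩

theorem eventually_mem_compactCovering {X : Type*} [TopologicalSpace X] [SigmaCompactSpace X]
    (x : X) : ∀ᶠ n in atTop, x ∈ compactCovering X n :=
  let ⟨n, hn⟩ := exists_mem_compactCovering x
  (eventually_ge_atTop n).mono fun _ hk => compactCovering_subset X hk hn

namespace MetricOn

variable {X : Type*} [TopologicalSpace X]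

@[fun_prop]
theorem _root_.Continuous.metricOn_toFun {Z : Type*} [TopologicalSpace Z] {e : Z → MetricOn X}
    {f g : Z → X} (he : Continuous e) (hf : Continuous f) (hg : Continuous g) :
    Continuous fun z => (e z).toFun (f z) (g z) :=
  continuous_eval.comp (he.prodMk (hf.prodMk hg))

/-- Two pairs in `K` at the same distance `≥ r` which, as unordered pairs, are `r`-apart. -/
def nonRigidIn (K : Set X) (r : ℝ) : Set (MetricOn X) :=
  {e | ∃ x ∈ K, ∃ y ∈ K, ∃ u ∈ K, ∃ v ∈ K, e.toFun x y = e.toFun u v ∧ r ≤ e.toFun x y ∧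
    r ≤ e.toFun x u + e.toFun y v ∧ r ≤ e.toFun x v + e.toFun y u}

theorem isClosed_nonRigidIn {K : Set X} (hK : IsCompact K) (r : ℝ) :
    IsClosed (nonRigidIn K r) := by
  have := isCompact_iff_compactSpace.1 hK
  have himage : nonRigidIn K r = Prod.fst '' ({p : MetricOn X × (K × K) × (K × K) |
      p.1.toFun p.2.1.1 p.2.1.2 = p.1.toFun p.2.2.1 p.2.2.2} ∩
      {p | r ≤ p.1.toFun p.2.1.1 p.2.1.2} ∩
      {p | r ≤ p.1.toFun p.2.1.1 p.2.2.1 + p.1.toFun p.2.1.2 p.2.2.2} ∩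
      {p | r ≤ p.1.toFun p.2.1.1 p.2.2.2 + p.1.toFun p.2.1.2 p.2.2.1}) := by
    ext e
    constructor
    · rintro ⟨x, hx, y, hy, u, hu, v, hv, h⟩
      exact ⟨(e, (⟨x, hx⟩, ⟨y, hy⟩), (⟨u, hu⟩, ⟨v, hv⟩)),
        ⟨⟨⟨h.1, h.2.1⟩, h.2.2.1⟩, h.2.2.2⟩, rfl⟩
    · rintro ⟨⟨f, ⟨⟨x, hx⟩, ⟨y, hy⟩⟩, ⟨⟨u, hu⟩, ⟨v, hv⟩⟩⟩, ⟨⟨⟨h1, h2⟩, h3⟩, h4⟩, rfl⟩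
      exact ⟨x, hx, y, hy, u, hu, v, hv, h1, h2, h3, h4⟩
  rw [himage]
  refine isClosedMap_fst_of_compactSpace _ ((((isClosed_eq ?_ ?_).inter
    (isClosed_le ?_ ?_)).inter (isClosed_le ?_ ?_)).inter (isClosed_le ?_ ?_)) <;> fun_prop

theorem setOf_stronglyRigid_eq_iInter [SigmaCompactSpace X] :
    {e : MetricOn X | StronglyRigid e} =
      ⋂ n : ℕ, ⋂ m : ℕ, (nonRigidIn (compactCovering X n) (1 / (m + 1)))ᶜ := by
  ext e
  simp only [mem_ofPred_eq, mem_iInter, mem_compl_iff]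
  refine ⟨fun he n m ⟨x, _, y, _, u, _, v, _, heq, hxy, hxu, hxv⟩ => ?_,
    fun he x y u v heq h0 => ?_⟩
  · have hm : (0 : ℝ) < 1 / (m + 1) := by positivity
    rcases Set.pair_eq_pair_iff.1 (he x y u v heq (by linarith)) with ⟨rfl, rfl⟩ | ⟨rfl, rfl⟩
    · rw [e.refl, e.refl] at hxu; linarith
    · rw [e.refl, e.refl] at hxv; linarith
  · by_contra hne
    rw [Set.pair_eq_pair_iff, not_or] at hne
    obtain ⟨n, hx, hy, hu, hv⟩ := ((eventually_mem_compactCovering x).and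
      ((eventually_mem_compactCovering y).and ((eventually_mem_compactCovering u).and
        (eventually_mem_compactCovering v)))).exists
    obtain ⟨m, hm⟩ := exists_nat_one_div_lt (lt_min ((e.nonneg x y).lt_of_ne' h0)
      (lt_min (e.add_pos_of_ne hne.1) (e.add_pos_of_ne hne.2)))
    simp only [lt_min_iff, one_div] at hm
    exact he n m ⟨x, hx, y, hy, u, hu, v, hv, heq, by simpa using hm.1.le,
      by simpa using hm.2.1.le, by simpa using hm.2.2.le⟩

end MetricOn

/-- For a strongly zero-dimensional metrizable space `X` with
`card X ≤ 𝔠`, every metric in `Met(X)` is `ε`-approximated by a strongly rigid one, i.e.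
the set `SR(X)` of strongly rigid metrics is dense in `(Met(X), D_X)`; moreover, if `X`
is `σ`-compact, then `SR(X)` is a dense `Gδ` subset of `(Met(X), D_X)`. -/
theorem stmt13 {X : Type} [TopologicalSpace X] [TopologicalSpace.MetrizableSpace X]
    (hX : StronglyZeroDim X) (hcard : Cardinal.mk X ≤ Cardinal.continuum) :
    (∀ d : MetricOn X, ∀ ε : ℝ, 0 < ε → ∃ e : MetricOn X,
        StronglyRigid e ∧ ∀ x y, |d.toFun x y - e.toFun x y| ≤ ε) ∧
    Dense {e : MetricOn X | StronglyRigid e} ∧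
    (SigmaCompactSpace X →
      Dense {e : MetricOn X | StronglyRigid e} ∧ IsGδ {e : MetricOn X | StronglyRigid e}) := by
  have hdense := hX.dense_setOf_stronglyRigid hcard
  refine ⟨fun d ε hε => hX.exists_stronglyRigid_abs_sub_le hcard d hε, hdense,
    fun _ => ⟨hdense, ?_⟩⟩
  rw [MetricOn.setOf_stronglyRigid_eq_iInter]
  exact .iInter fun n => .iInter fun m =>
    (MetricOn.isClosed_nonRigidIn (isCompact_compactCovering X n) _).isOpen_compl.isGδ
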